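/- arXiv:2003.03876 — 3 statements merged into one kernel-verified Lean document; each statement's English description precedes it below -/
import Mathlib

section
/- Let φ(u) = exp(-u²/2)/√(2π) be the standard normal density and Φ(z) = ∫_{-∞}^z φ(u) du the standard normal cdf. For every z < 0 and every ν > 0 with z < -ν/2, the relative value R(z,ν) = (e^{zν}·Φ(z+ν) − e^{−zν}·Φ(z−ν)) / (e^{−zν} − e^{zν}) satisfies R(z,ν) ≤ −φ(z)/z − Φ(z). -/
/-!
Since `log φ` is concave, `φ` lies below its exponential tangent at `z`:
`φ u ≤ φ z · e^{z² - z u}`. Integrating over `[z, z + ν]` and `[z - ν, z]` bounds the increments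
`Φ(z + ν) - Φ z` and `Φ z - Φ(z - ν)` by elementary exponentials; weighted by `e^{zν}` and `e^{-zν}`
these bounds add up to `-φ(z)/z · (e^{-zν} - e^{zν})`, and the denominator `e^{-zν} - e^{zν}` is
positive because `z < 0 < ν`.
-/

open MeasureTheory Real

/-- The standard normal density φ(u) = exp(-u²/2)/√(2π). -/
noncomputable def stdNormalPdf (u : ℝ) : ℝ := Real.exp (-u ^ 2 / 2) / Real.sqrt (2 * Real.pi)

/-- The standard normal cdf Φ(z) = ∫_{-∞}^z φ(u) du. -/
noncomputable def stdNormalCdf (z : ℝ) : ℝ := ∫ u in Set.Iic z, stdNormalPdf u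

lemma integrable_stdNormalPdf : Integrable stdNormalPdf := by
  have h : stdNormalPdf = fun u => exp (-(1 / 2) * u ^ 2) * (√(2 * π))⁻¹ := by
    ext u
    rw [stdNormalPdf]
    ring_nf
  rw [h]
  exact (integrable_exp_neg_mul_sq (by norm_num)).mul_const _

lemma stdNormalCdf_sub_stdNormalCdf (a b : ℝ) :
    stdNormalCdf b - stdNormalCdf a = ∫ u in a..b, stdNormalPdf u :=
  intervalIntegral.integral_Iic_sub_Iic integrable_stdNormalPdf.integrableOn
    integrable_stdNormalPdf.integrableOn

lemma stdNormalPdf_le_mul_exp (z u : ℝ) :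
    stdNormalPdf u ≤ stdNormalPdf z * exp (-z * u + z ^ 2) := by
  rw [stdNormalPdf, stdNormalPdf, div_mul_eq_mul_div, ← exp_add]
  gcongr
  nlinarith [sq_nonneg (u - z)]

lemma integral_exp_neg_mul_add_sq {z : ℝ} (hz : z ≠ 0) (a b : ℝ) :
    ∫ u in a..b, exp (-z * u + z ^ 2) = (exp (-z * a + z ^ 2) - exp (-z * b + z ^ 2)) / z := by
  rw [intervalIntegral.integral_comp_mul_add (fun x => exp x) (neg_ne_zero.mpr hz), integral_exp,
    smul_eq_mul]
  ring

lemma stdNormalCdf_sub_le {z : ℝ} (hz : z ≠ 0) {a b : ℝ} (hab : a ≤ b) :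
    stdNormalCdf b - stdNormalCdf a ≤
      stdNormalPdf z * (exp (-z * a + z ^ 2) - exp (-z * b + z ^ 2)) / z := by
  rw [stdNormalCdf_sub_stdNormalCdf, mul_div_assoc, ← integral_exp_neg_mul_add_sq hz,
    ← intervalIntegral.integral_const_mul]
  refine intervalIntegral.integral_mono_on hab integrable_stdNormalPdf.intervalIntegrable ?_
    fun u _ => stdNormalPdf_le_mul_exp z u
  exact (by fun_prop : Continuous fun u => stdNormalPdf z * exp (-z * u + z ^ 2)).intervalIntegrable
    _ _

theorem strangle_relative_value_le_bound_general (z ν : ℝ) (hz : z < 0) (hν : 0 < ν) :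
    (Real.exp (z * ν) * stdNormalCdf (z + ν) - Real.exp (-z * ν) * stdNormalCdf (z - ν)) /
      (Real.exp (-z * ν) - Real.exp (z * ν)) ≤
      -stdNormalPdf z / z - stdNormalCdf z := by
  have hdenom : 0 < exp (-z * ν) - exp (z * ν) := sub_pos.mpr (exp_lt_exp.mpr (by nlinarith))
  have hup : stdNormalCdf (z + ν) - stdNormalCdf z ≤ stdNormalPdf z / z * (1 - exp (-z * ν)) := by
    have := stdNormalCdf_sub_le hz.ne (le_add_of_nonneg_right (a := z) hν.le)
    rwa [show -z * z + z ^ 2 = 0 by ring, exp_zero, show -z * (z + ν) + z ^ 2 = -z * ν by ring,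
      mul_div_right_comm] at this
  have hdown : stdNormalCdf z - stdNormalCdf (z - ν) ≤ stdNormalPdf z / z * (exp (z * ν) - 1) := by
    have := stdNormalCdf_sub_le hz.ne (sub_le_self z hν.le)
    rwa [show -z * (z - ν) + z ^ 2 = z * ν by ring, show -z * z + z ^ 2 = 0 by ring, exp_zero,
      mul_div_right_comm] at this
  have hinv : exp (z * ν) * exp (-z * ν) = 1 := by rw [← exp_add, neg_mul, add_neg_cancel, exp_zero]
  rw [div_le_iff₀ hdenom, neg_div]
  nlinarith [mul_le_mul_of_nonneg_left hup (exp_pos (z * ν)).le,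
    mul_le_mul_of_nonneg_left hdown (exp_pos (-z * ν)).le]

/-- For z < 0, ν > 0 with z < -ν/2, the strangle's relative value
R(z,ν) = (e^{zν}Φ(z+ν) − e^{−zν}Φ(z−ν))/(e^{−zν} − e^{zν}) is bounded by
−φ(z)/z − Φ(z). -/
theorem strangle_relative_value_le_bound (z ν : ℝ) (hz : z < 0) (hν : 0 < ν)
    (hB : z < -ν / 2) :
    (Real.exp (z * ν) * stdNormalCdf (z + ν) - Real.exp (-z * ν) * stdNormalCdf (z - ν)) /
      (Real.exp (-z * ν) - Real.exp (z * ν)) ≤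
      -stdNormalPdf z / z - stdNormalCdf z :=
  strangle_relative_value_le_bound_general z ν hz hν
end

section
/- Let φ(u) = exp(-u²/2)/√(2π) be the standard normal density and Φ the standard normal cdf. For every z < 0 and every ν > 0 with z < -ν/2, the relative value R(z,ν) = (e^{zν}·Φ(z+ν) − e^{−zν}·Φ(z−ν)) / (e^{−zν} − e^{zν}) is strictly positive. -/
open MeasureTheory Real

/-!
Writing x = z + ν, the numerator is e^{zν} (Φ(x) - e^{-2zν} Φ(x - 2ν)). Translating the
Gaussian by a = 2ν is an exponential tilt, φ(u - a) = φ(u) e^{au - a²/2}, so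
e^{a²/2 - ax} Φ(x - a) = ∫_{u ≤ x} φ(u) e^{a(u - x)} du, whose weight is < 1 for u < x.
Hence the numerator is positive, and so is the denominator e^{-zν} - e^{zν} since z < 0 < ν.
-/

lemma stdNormalPdf_pos (u : ℝ) : 0 < stdNormalPdf u :=
  div_pos (exp_pos _) (sqrt_pos.2 (by positivity))

@[fun_prop]
lemma continuous_stdNormalPdf : Continuous stdNormalPdf := by
  unfold stdNormalPdf
  fun_prop

lemma stdNormalPdf_sub (u a : ℝ) :
    stdNormalPdf (u - a) = stdNormalPdf u * exp (a * u - a ^ 2 / 2) := by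
  simp only [stdNormalPdf, div_mul_eq_mul_div, ← exp_add]
  ring_nf

lemma stdNormalCdf_sub (x a : ℝ) :
    stdNormalCdf (x - a) = ∫ u in Set.Iic x, stdNormalPdf (u - a) := by
  have hpre : (fun u : ℝ => u - a) ⁻¹' Set.Iic (x - a) = Set.Iic x := by
    ext u; simp
  rw [stdNormalCdf, ← hpre, (measurePreserving_sub_right volume a).setIntegral_preimage_emb
    (measurableEmbedding_subRight a)]

lemma exp_mul_stdNormalCdf_sub (x a : ℝ) :
    exp (a ^ 2 / 2 - a * x) * stdNormalCdf (x - a) =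
      ∫ u in Set.Iic x, stdNormalPdf u * exp (a * (u - x)) := by
  rw [stdNormalCdf_sub, ← integral_const_mul]
  congr 1 with u
  rw [stdNormalPdf_sub, mul_left_comm, ← exp_add]
  ring_nf

lemma exp_mul_stdNormalCdf_sub_lt (x : ℝ) {a : ℝ} (ha : 0 < a) :
    exp (a ^ 2 / 2 - a * x) * stdNormalCdf (x - a) < stdNormalCdf x := by
  set gap : ℝ → ℝ := fun u => stdNormalPdf u * (1 - exp (a * (u - x)))
  have hweight_lt {u : ℝ} (hu : u < x) : exp (a * (u - x)) < 1 :=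
    exp_lt_one_iff.2 (mul_neg_of_pos_of_neg ha (sub_neg.2 hu))
  have hweight_le {u : ℝ} (hu : u ≤ x) : exp (a * (u - x)) ≤ 1 :=
    exp_le_one_iff.2 (mul_nonpos_of_nonneg_of_nonpos ha.le (sub_nonpos.2 hu))
  have hint : IntegrableOn (fun u => stdNormalPdf u * exp (a * (u - x))) (Set.Iic x) := by
    refine integrable_stdNormalPdf.integrableOn.mono'
      (by fun_prop : Continuous _).aestronglyMeasurable
      (ae_restrict_of_forall_mem measurableSet_Iic fun u hu => ?_)
    rw [norm_of_nonneg (mul_nonneg (stdNormalPdf_pos u).le (exp_pos _).le)]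
    exact mul_le_of_le_one_right (stdNormalPdf_pos u).le (hweight_le hu)
  have hgap : ∫ u in Set.Iic x, gap u = stdNormalCdf x -
      ∫ u in Set.Iic x, stdNormalPdf u * exp (a * (u - x)) := by
    simp only [gap, mul_one_sub]
    exact integral_sub integrable_stdNormalPdf.integrableOn hint
  have hsupport : Function.support gap ∩ Set.Iic x = Set.Iio x := by
    ext u
    refine ⟨fun ⟨hne, hle⟩ => lt_of_le_of_ne hle fun (h : u = x) => hne (by simp [gap, h]),
      fun (hu : u < x) => ?_⟩
    exact ⟨(mul_pos (stdNormalPdf_pos u) (sub_pos.2 (hweight_lt hu))).ne', Set.mem_Iic.2 hu.le⟩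
  have hpos : 0 < ∫ u in Set.Iic x, gap u := by
    rw [setIntegral_pos_iff_support_of_nonneg_ae, hsupport]
    · simp
    · exact ae_restrict_of_forall_mem measurableSet_Iic fun u hu =>
        mul_nonneg (stdNormalPdf_pos u).le (sub_nonneg.2 (hweight_le hu))
    · exact (integrable_stdNormalPdf.integrableOn.sub hint).congr
        (Filter.Eventually.of_forall fun u => (mul_one_sub _ _).symm)
  rw [exp_mul_stdNormalCdf_sub]
  linarith

theorem strangle_relative_value_pos_general (z ν : ℝ) (hz : z < 0) (hν : 0 < ν) :
    0 < (Real.exp (z * ν) * stdNormalCdf (z + ν) - Real.exp (-z * ν) * stdNormalCdf (z - ν)) /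
      (Real.exp (-z * ν) - Real.exp (z * ν)) := by
  have hnum := exp_mul_stdNormalCdf_sub_lt (z + ν) (mul_pos two_pos hν)
  rw [show z + ν - 2 * ν = z - ν by ring,
    show (2 * ν) ^ 2 / 2 - 2 * ν * (z + ν) = -(2 * z * ν) by ring] at hnum
  have hsplit : exp (-z * ν) = exp (z * ν) * exp (-(2 * z * ν)) := by
    rw [← exp_add]; ring_nf
  refine div_pos ?_ (sub_pos.2 (exp_lt_exp.2 (by nlinarith)))
  rw [hsplit, mul_assoc, ← mul_sub]
  exact mul_pos (exp_pos _) (sub_pos.2 hnum)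

/-- For z < 0, ν > 0 with z < -ν/2, the strangle's relative value
R(z,ν) = (e^{zν}Φ(z+ν) − e^{−zν}Φ(z−ν))/(e^{−zν} − e^{zν}) is strictly positive. -/
theorem strangle_relative_value_pos (z ν : ℝ) (hz : z < 0) (hν : 0 < ν)
    (hB : z < -ν / 2) :
    0 < (Real.exp (z * ν) * stdNormalCdf (z + ν) - Real.exp (-z * ν) * stdNormalCdf (z - ν)) /
      (Real.exp (-z * ν) - Real.exp (z * ν)) :=
  strangle_relative_value_pos_general z ν hz hν
end

section
/- Let Φ be the standard normal cdf. Given μ > 0, σ > 0, t > 0, r ∈ ℝ, δ ∈ (0, 1/2), set z = Φ⁻¹(δ) < 0, ν = σ√t, k⁺ = μ·e^{−zν + ν²/2 + rt}, k⁻ = μ·e^{zν + ν²/2 + rt}, and let c_μ(k⁺) = μ·Φ(d₁(k⁺)) − k⁺·e^{−rt}·Φ(d₂(k⁺)) and p_μ(k⁻) = k⁻·e^{−rt}·Φ(−d₂(k⁻)) − μ·(1 − Φ(d₁(k⁻))) be the Black–Scholes call and put prices. Then the relative value (c_μ(k⁺) + p_μ(k⁻)) / ((k⁺ − k⁻)·e^{−rt})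 equals (e^{zν}·Φ(z+ν) − e^{−zν}·Φ(z−ν)) / (e^{−zν} − e^{zν}); in particular it is independent of the current price μ and the risk-free rate r, and depends on σ and t only through ν = σ√t. -/
open MeasureTheory Real

/-- Black–Scholes d₁(k) = (log(μ/k) + (r + σ²/2)t)/(σ√t). -/
noncomputable def d1 (μ σ t r k : ℝ) : ℝ :=
  (Real.log (μ / k) + (r + σ ^ 2 / 2) * t) / (σ * Real.sqrt t)

/-- Black–Scholes d₂(k) = d₁(k) − σ√t. -/
noncomputable def d2 (μ σ t r k : ℝ) : ℝ := d1 μ σ t r k - σ * Real.sqrt t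

/-- Black–Scholes call price c_μ(k) = μ·Φ(d₁(k)) − k·e^{−rt}·Φ(d₂(k)). -/
noncomputable def callPrice (μ σ t r k : ℝ) : ℝ :=
  μ * stdNormalCdf (d1 μ σ t r k) - k * Real.exp (-(r * t)) * stdNormalCdf (d2 μ σ t r k)

/-- Black–Scholes put price p_μ(k) = k·e^{−rt}·Φ(−d₂(k)) − μ·(1 − Φ(d₁(k))). -/
noncomputable def putPrice (μ σ t r k : ℝ) : ℝ :=
  k * Real.exp (-(r * t)) * stdNormalCdf (-(d2 μ σ t r k)) -
    μ * (1 - stdNormalCdf (d1 μ σ t r k))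

/-!
Write a strike as `k = μ·exp(aν + ν²/2 + rt)` with `ν = σ√t`. Then `d₁(k) = -a` and
`d₂(k) = -a - ν`, so every price becomes `μ·e^{ν²/2}` times a function of `a` and `ν` alone.
The strikes of the strangle are `a = -z` (call) and `a = z` (put); by the symmetry
`Φ(-z) = 1 - Φ(z)` the terms `±μΦ(z)` of the two prices cancel, and the common factor
`μ·e^{ν²/2}` cancels against the same factor in `(k⁺ - k⁻)·e^{-rt}`.
-/

open ProbabilityTheory

lemma integral_Iic_add_integral_Iic_neg_of_even {E : Type*} [NormedAddCommGroup E]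
    [NormedSpace ℝ E] {f : ℝ → E} (hf : Integrable f) (heven : ∀ x, f (-x) = f x) (c : ℝ) :
    (∫ x in Set.Iic c, f x) + ∫ x in Set.Iic (-c), f x = ∫ x, f x := by
  have hreflect : ∫ x in Set.Iic (-c), f x = ∫ x in Set.Ioi c, f x := by
    simpa only [heven, neg_neg] using integral_comp_neg_Iic (-c) f
  rw [hreflect, intervalIntegral.integral_Iic_add_Ioi hf.integrableOn hf.integrableOn]

lemma stdNormalPdf_eq_gaussianPDFReal : stdNormalPdf = gaussianPDFReal 0 1 := by
  ext u
  simp only [stdNormalPdf, gaussianPDFReal, NNReal.coe_one, mul_one, sub_zero,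
    div_eq_inv_mul]

lemma stdNormalCdf_add_stdNormalCdf_neg (z : ℝ) : stdNormalCdf z + stdNormalCdf (-z) = 1 := by
  rw [stdNormalCdf, stdNormalCdf, stdNormalPdf_eq_gaussianPDFReal,
    integral_Iic_add_integral_Iic_neg_of_even (integrable_gaussianPDFReal 0 1)
      (fun x => by simp [gaussianPDFReal]),
    integral_gaussianPDFReal_eq_one 0 one_ne_zero]

section StrikeParametrization

variable {μ σ t ν : ℝ} (r a : ℝ)

lemma d1_mul_exp (hμ : μ ≠ 0) (hσ : σ ≠ 0) (ht : 0 < t) (hν : ν = σ * √t) :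
    d1 μ σ t r (μ * exp (a * ν + ν ^ 2 / 2 + r * t)) = -a := by
  have hν0 : ν ≠ 0 := hν ▸ mul_ne_zero hσ (sqrt_pos.mpr ht).ne'
  have hνsq : σ ^ 2 * t = ν ^ 2 := by rw [hν, mul_pow, sq_sqrt ht.le]
  rw [d1, ← hν, div_mul_cancel_left₀ hμ, log_inv, log_exp]
  field_simp
  linear_combination hνsq

lemma d2_mul_exp (hμ : μ ≠ 0) (hσ : σ ≠ 0) (ht : 0 < t) (hν : ν = σ * √t) :
    d2 μ σ t r (μ * exp (a * ν + ν ^ 2 / 2 + r * t)) = -a - ν := by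
  rw [d2, d1_mul_exp r a hμ hσ ht hν, hν]

lemma callPrice_mul_exp (hμ : μ ≠ 0) (hσ : σ ≠ 0) (ht : 0 < t) (hν : ν = σ * √t) :
    callPrice μ σ t r (μ * exp (a * ν + ν ^ 2 / 2 + r * t)) =
      μ * stdNormalCdf (-a) - μ * exp (a * ν + ν ^ 2 / 2) * stdNormalCdf (-a - ν) := by
  rw [callPrice, d1_mul_exp r a hμ hσ ht hν, d2_mul_exp r a hμ hσ ht hν, mul_assoc μ,
    ← exp_add, add_neg_cancel_right]

lemma putPrice_mul_exp (hμ : μ ≠ 0) (hσ : σ ≠ 0) (ht : 0 < t) (hν : ν = σ * √t) :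
    putPrice μ σ t r (μ * exp (a * ν + ν ^ 2 / 2 + r * t)) =
      μ * exp (a * ν + ν ^ 2 / 2) * stdNormalCdf (a + ν) - μ * stdNormalCdf a := by
  rw [putPrice, d1_mul_exp r a hμ hσ ht hν, d2_mul_exp r a hμ hσ ht hν, mul_assoc μ,
    ← exp_add, add_neg_cancel_right, neg_sub_left, neg_neg, add_comm ν,
    ← stdNormalCdf_add_stdNormalCdf_neg a, add_sub_cancel_right]

end StrikeParametrization

theorem strangle_relative_value_formula_general (μ σ t r z ν : ℝ)
    (hμ : 0 < μ) (hσ : 0 < σ) (ht : 0 < t) (hν : ν = σ * Real.sqrt t) :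
    (callPrice μ σ t r (μ * Real.exp (-z * ν + ν ^ 2 / 2 + r * t)) +
        putPrice μ σ t r (μ * Real.exp (z * ν + ν ^ 2 / 2 + r * t))) /
        ((μ * Real.exp (-z * ν + ν ^ 2 / 2 + r * t) -
            μ * Real.exp (z * ν + ν ^ 2 / 2 + r * t)) * Real.exp (-(r * t))) =
      (Real.exp (z * ν) * stdNormalCdf (z + ν) -
          Real.exp (-z * ν) * stdNormalCdf (z - ν)) /
        (Real.exp (-z * ν) - Real.exp (z * ν)) := by
  set C := μ * exp (ν ^ 2 / 2)
  have hC : C ≠ 0 := mul_ne_zero hμ.ne' (exp_ne_zero _)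
  have hnum : callPrice μ σ t r (μ * exp (-z * ν + ν ^ 2 / 2 + r * t)) +
      putPrice μ σ t r (μ * exp (z * ν + ν ^ 2 / 2 + r * t)) =
        C * (exp (z * ν) * stdNormalCdf (z + ν) - exp (-z * ν) * stdNormalCdf (z - ν)) := by
    rw [callPrice_mul_exp r (-z) hμ.ne' hσ.ne' ht hν, putPrice_mul_exp r z hμ.ne' hσ.ne' ht hν,
      neg_neg, exp_add, exp_add]
    ring
  have hden : (μ * exp (-z * ν + ν ^ 2 / 2 + r * t) - μ * exp (z * ν + ν ^ 2 / 2 + r * t)) *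
      exp (-(r * t)) = C * (exp (-z * ν) - exp (z * ν)) := by
    simp only [exp_add, exp_neg]
    field_simp
    ring
  rw [hnum, hden, mul_div_mul_left _ _ hC]

/-- The relative value of the δ-symmetric strangle,
(c_μ(k⁺) + p_μ(k⁻))/((k⁺ − k⁻)·e^{−rt}) with k⁺ = μ·e^{−zν+ν²/2+rt} and
k⁻ = μ·e^{zν+ν²/2+rt}, equals
(e^{zν}Φ(z+ν) − e^{−zν}Φ(z−ν))/(e^{−zν} − e^{zν}); in particular it does not
depend on μ or r, and depends on σ, t only through ν = σ√t. -/
theorem strangle_relative_value_formula (μ σ t r δ z ν : ℝ)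
    (hμ : 0 < μ) (hσ : 0 < σ) (ht : 0 < t) (hδ : δ ∈ Set.Ioo (0 : ℝ) (1 / 2))
    (hz : stdNormalCdf z = δ) (hzneg : z < 0) (hν : ν = σ * Real.sqrt t) :
    (callPrice μ σ t r (μ * Real.exp (-z * ν + ν ^ 2 / 2 + r * t)) +
        putPrice μ σ t r (μ * Real.exp (z * ν + ν ^ 2 / 2 + r * t))) /
        ((μ * Real.exp (-z * ν + ν ^ 2 / 2 + r * t) -
            μ * Real.exp (z * ν + ν ^ 2 / 2 + r * t)) * Real.exp (-(r * t))) =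
      (Real.exp (z * ν) * stdNormalCdf (z + ν) -
          Real.exp (-z * ν) * stdNormalCdf (z - ν)) /
        (Real.exp (-z * ν) - Real.exp (z * ν)) :=
  strangle_relative_value_formula_general μ σ t r z ν hμ hσ ht hν
end
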